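/- arXiv:0806.2745 — 5 statements merged into one kernel-verified Lean document; each statement's English description precedes it below -/
import Mathlib

section
/- Let m⁻ < 0 < m⁺ be the roots of ρ - μm - (σ²/2)m² = 0 with μ > 0 and x̂ = (1/(m⁺ - m⁻)) ln((m⁻)²/(m⁺)²). Define V̂(x) = f(x)/f'(x̂) for 0 ≤ x ≤ x̂ and V̂(x) = x - x̂ + μ/ρ for x ≥ x̂, where f(x) = exp(m⁺x) - exp(m⁻x). Then V̂ is continuously differentiable on (0,∞) with V̂'(x̂) = 1 and V̂(x̂) = μ/ρ. -/
/-!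
Each exponential `exp (m x)` with `ρ - μ m - (σ²/2) m² = 0` solves `ρ f = μ f' + (σ²/2) f''`, hence so
does `f = exp (m⁺ x) - exp (m⁻ x)`. The threshold `x̂` is exactly the zero of
`f'' = (m⁺)² exp (m⁺ x) - (m⁻)² exp (m⁻ x)`, so there the equation reads `ρ f(x̂) = μ f'(x̂)`: the two
pieces of `V̂` agree in value `μ/ρ` and in slope `1` at `x̂`, and gluing two C¹ functions that match to
first order at a point gives a C¹ function.
-/

open Real Set

section Gluing

variable {g h g' h' : ℝ → ℝ} {t : ℝ}

theorem hasDerivAt_ite_le (hg : ∀ x, HasDerivAt g (g' x) x) (hh : ∀ x, HasDerivAt h (h' x) x)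
    (hval : g t = h t) (hslope : g' t = h' t) (x : ℝ) :
    HasDerivAt (fun y => if y ≤ t then g y else h y) (if x ≤ t then g' x else h' x) x := by
  set k : ℝ → ℝ := fun y => if y ≤ t then g y else h y
  have hk_left : ∀ y ∈ Iic t, k y = g y := fun y hy => if_pos hy
  have hk_right : ∀ y ∈ Ici t, k y = h y := by
    intro y hy
    rcases eq_or_lt_of_le (mem_Ici.mp hy) with rfl | hty
    · exact (if_pos le_rfl).trans hval
    · exact if_neg (not_le.mpr hty)
  rcases lt_trichotomy x t with hxt | rfl | htx
  · rw [if_pos hxt.le]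
    exact (hg x).congr_of_eventuallyEq <|
      Filter.eventually_of_mem (Iio_mem_nhds hxt) fun y hy => hk_left y (Iio_subset_Iic_self hy)
  · rw [if_pos le_rfl]
    have hleft : HasDerivWithinAt k (g' x) (Iic x) x :=
      (hg x).hasDerivWithinAt.congr hk_left (hk_left x self_mem_Iic)
    have hright : HasDerivWithinAt k (g' x) (Ici x) x := by
      rw [hslope]
      exact (hh x).hasDerivWithinAt.congr hk_right (hk_right x self_mem_Ici)
    simpa only [Iic_union_Ici, hasDerivWithinAt_univ] using hleft.union hright
  · rw [if_neg (not_le.mpr htx)]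
    exact (hh x).congr_of_eventuallyEq <|
      Filter.eventually_of_mem (Ioi_mem_nhds htx) fun y hy => hk_right y (Ioi_subset_Ici_self hy)

theorem contDiff_one_ite_le (hg : ∀ x, HasDerivAt g (g' x) x) (hh : ∀ x, HasDerivAt h (h' x) x)
    (hg' : Continuous g') (hh' : Continuous h') (hval : g t = h t) (hslope : g' t = h' t) :
    ContDiff ℝ 1 fun y => if y ≤ t then g y else h y := by
  have hderiv := hasDerivAt_ite_le hg hh hval hslope
  rw [contDiff_one_iff_deriv]
  refine ⟨fun x => (hderiv x).differentiableAt, ?_⟩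
  rw [funext fun x => (hderiv x).deriv]
  exact hg'.if_le hh' continuous_id continuous_const fun x hx => hx ▸ hslope

end Gluing

theorem hasDerivAt_exp_mul_sub_exp_mul (mp mm x : ℝ) :
    HasDerivAt (fun y => exp (mp * y) - exp (mm * y))
      (mp * exp (mp * x) - mm * exp (mm * x)) x := by
  have hp := ((hasDerivAt_id' x).const_mul mp).exp
  have hm := ((hasDerivAt_id' x).const_mul mm).exp
  exact (hp.sub hm).congr_deriv (by ring)

theorem sq_mul_exp_eq_sq_mul_exp_at_log_ratio {mp mm : ℝ} (hmp : mp ≠ 0) (hmm : mm ≠ 0)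
    (hne : mp ≠ mm) :
    let xhat := (1 / (mp - mm)) * log (mm ^ 2 / mp ^ 2)
    mp ^ 2 * exp (mp * xhat) = mm ^ 2 * exp (mm * xhat) := by
  intro xhat
  have hsub : mp - mm ≠ 0 := sub_ne_zero.mpr hne
  have hgap : exp ((mp - mm) * xhat) = mm ^ 2 / mp ^ 2 := by
    rw [show (mp - mm) * xhat = log (mm ^ 2 / mp ^ 2) by simp only [xhat]; field_simp]
    exact exp_log (by positivity)
  have hsplit : exp (mp * xhat) = exp (mm * xhat) * exp ((mp - mm) * xhat) := by
    rw [← exp_add]; ring_nf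
  rw [hsplit, hgap]
  field_simp

theorem value_eq_of_roots_of_inflection {ρ μ σ mm mp a b : ℝ} (hρ : ρ ≠ 0)
    (hslope : mp * a - mm * b ≠ 0)
    (hrootm : ρ - μ * mm - σ ^ 2 / 2 * mm ^ 2 = 0) (hrootp : ρ - μ * mp - σ ^ 2 / 2 * mp ^ 2 = 0)
    (hinfl : mp ^ 2 * a = mm ^ 2 * b) :
    (a - b) / (mp * a - mm * b) = μ / ρ := by
  rw [div_eq_div_iff hslope hρ]
  linear_combination a * hrootp - b * hrootm + σ ^ 2 / 2 * hinfl

theorem stmt_4_general (ρ μ σ mm mp : ℝ) (hρ : 0 < ρ)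
    (hmm : mm < 0) (hmp : 0 < mp)
    (hrootm : ρ - μ * mm - σ^2 / 2 * mm^2 = 0)
    (hrootp : ρ - μ * mp - σ^2 / 2 * mp^2 = 0) :
    let f : ℝ → ℝ := fun x => Real.exp (mp * x) - Real.exp (mm * x)
    let xhat : ℝ := (1 / (mp - mm)) * Real.log (mm^2 / mp^2)
    let Vhat : ℝ → ℝ := fun x =>
      if x ≤ xhat then f x / (mp * Real.exp (mp * xhat) - mm * Real.exp (mm * xhat))
      else x - xhat + μ / ρ
    ContDiffOn ℝ 1 Vhat (Set.Ioi 0) ∧ deriv Vhat xhat = 1 ∧ Vhat xhat = μ / ρ := by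
  intro f xhat Vhat
  set c := mp * exp (mp * xhat) - mm * exp (mm * xhat)
  have hc : c ≠ 0 := by
    have := exp_pos (mp * xhat); have := exp_pos (mm * xhat)
    exact (by nlinarith : 0 < c).ne'
  have hval : f xhat / c = μ / ρ :=
    value_eq_of_roots_of_inflection hρ.ne' hc hrootm hrootp
      (sq_mul_exp_eq_sq_mul_exp_at_log_ratio hmp.ne' hmm.ne (by linarith))
  have hf x : HasDerivAt (fun y => f y / c)
      ((mp * exp (mp * x) - mm * exp (mm * x)) / c) x :=
    (hasDerivAt_exp_mul_sub_exp_mul mp mm x).div_const c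
  have hline x : HasDerivAt (fun y => y - xhat + μ / ρ) 1 x :=
    ((hasDerivAt_id x).sub_const xhat).add_const (μ / ρ)
  have hslope : (mp * exp (mp * xhat) - mm * exp (mm * xhat)) / c = 1 := div_self hc
  have hvalue : f xhat / c = xhat - xhat + μ / ρ := by rw [hval, sub_self, zero_add]
  refine ⟨(contDiff_one_ite_le hf hline (by fun_prop) continuous_const hvalue hslope).contDiffOn,
    ?_, ?_⟩
  · rw [(hasDerivAt_ite_le hf hline hvalue hslope xhat).deriv, if_pos le_rfl, hslope]
  · exact (if_pos le_rfl).trans hval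

/-- The value function V̂ built from f(x) = exp(m⁺x) - exp(m⁻x) below the threshold
x̂ and linear above it is C¹ on (0,∞) with V̂'(x̂) = 1 and V̂(x̂) = μ/ρ. -/
theorem stmt_4 (ρ μ σ mm mp : ℝ) (hρ : 0 < ρ) (hμ : 0 < μ) (hσ : 0 < σ)
    (hmm : mm < 0) (hmp : 0 < mp)
    (hrootm : ρ - μ * mm - σ^2 / 2 * mm^2 = 0)
    (hrootp : ρ - μ * mp - σ^2 / 2 * mp^2 = 0) :
    let f : ℝ → ℝ := fun x => Real.exp (mp * x) - Real.exp (mm * x)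
    let xhat : ℝ := (1 / (mp - mm)) * Real.log (mm^2 / mp^2)
    let Vhat : ℝ → ℝ := fun x =>
      if x ≤ xhat then f x / (mp * Real.exp (mp * xhat) - mm * Real.exp (mm * xhat))
      else x - xhat + μ / ρ
    ContDiffOn ℝ 1 Vhat (Set.Ioi 0) ∧ deriv Vhat xhat = 1 ∧ Vhat xhat = μ / ρ :=
  stmt_4_general ρ μ σ mm mp hρ hmm hmp hrootm hrootp
end

section
/- Let f(x) = exp(m⁺x) - exp(m⁻x) with m⁻ < 0 < m⁺ roots of ρ - μm - (σ²/2)m² = 0, μ > 0, and x̂ = (1/(m⁺-m⁻)) ln((m⁻)²/(m⁺)²). Then the function V̂(x) = f(x)/f'(x̂) on [0, x̂] and V̂(x) = x - x̂ + μ/ρ on [x̂,∞) is concave on (0,∞). -/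
/-!
Both pieces of `V̂` have the value `μ/ρ` and slope `1` at `x̂`: the slope because `V̂` is
normalised by `f'(x̂)`, the value because `m⁺² e^{m⁺x̂} = m⁻² e^{m⁻x̂}` turns `f(x̂)/f'(x̂)` into
`(m⁺ + m⁻)/(m⁺m⁻)`, which equals `μ/ρ` by Vieta's formulas. Hence `V̂` is differentiable, and its
derivative is antitone: on `(-∞, x̂]` because `f'' = m⁺² e^{m⁺x} - m⁻² e^{m⁻x}` is nonpositive
left of its zero `x̂`, and beyond `x̂` because it is constant. So `V̂` is even concave on all of `ℝ`.
-/

open Set Real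

theorem concaveOn_univ_ite_of_hasDerivAt {F G F' G' : ℝ → ℝ} {a : ℝ}
    (hF : ∀ x, HasDerivAt F (F' x) x) (hG : ∀ x, HasDerivAt G (G' x) x)
    (hval : F a = G a) (hslope : F' a = G' a)
    (hF' : AntitoneOn F' (Iic a)) (hG' : AntitoneOn G' (Ici a)) :
    ConcaveOn ℝ univ (fun x => if x ≤ a then F x else G x) := by
  set V : ℝ → ℝ := fun x => if x ≤ a then F x else G x
  set V' : ℝ → ℝ := fun x => if x ≤ a then F' x else G' x
  have hV_right : ∀ y ∈ Ici a, V y = G y := by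
    intro y hy
    rcases (mem_Ici.mp hy).eq_or_lt with rfl | hlt
    · exact (if_pos le_rfl).trans hval
    · exact if_neg hlt.not_ge
  have hV'_right : ∀ y ∈ Ici a, V' y = G' y := by
    intro y hy
    rcases (mem_Ici.mp hy).eq_or_lt with rfl | hlt
    · exact (if_pos le_rfl).trans hslope
    · exact if_neg hlt.not_ge
  have hleft : ∀ x ≤ a, HasDerivWithinAt V (V' x) (Iic a) x := fun x hx => by
    rw [show V' x = F' x from if_pos hx]
    exact (hF x).hasDerivWithinAt.congr (fun y (hy : y ≤ a) => if_pos hy) (if_pos hx)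
  have hright : ∀ x ≥ a, HasDerivWithinAt V (V' x) (Ici a) x := fun x hx => by
    rw [hV'_right x hx]
    exact (hG x).hasDerivWithinAt.congr hV_right (hV_right x hx)
  have hV : ∀ x, HasDerivAt V (V' x) x := by
    intro x
    rcases lt_trichotomy x a with hx | rfl | hx
    · exact (hleft x hx.le).hasDerivAt (Iic_mem_nhds hx)
    · simpa only [Iic_union_Ici, hasDerivWithinAt_univ] using
        (hleft x le_rfl).union (hright x le_rfl)
    · exact (hright x hx.le).hasDerivAt (Ici_mem_nhds hx)
  have hV'_anti : Antitone V' :=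
    AntitoneOn.Iic_union_Ici (hF'.congr fun y hy => (if_pos hy).symm)
      (hG'.congr fun y hy => (hV'_right y hy).symm)
  refine Antitone.concaveOn_univ_of_deriv (fun x => (hV x).differentiableAt) ?_
  simpa only [funext fun x => (hV x).deriv] using hV'_anti

theorem hasDerivAt_exp_mul (c x : ℝ) :
    HasDerivAt (fun t => exp (c * t)) (c * exp (c * x)) x := by
  simpa only [mul_comm c] using (hasDerivAt_mul_const c).exp

section ExpDifference

variable {p q a : ℝ}

theorem sq_mul_exp_eq_of_eq_log (hpq : p ≠ q) (hp : p ≠ 0) (hq : q ≠ 0)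
    (ha : a = 1 / (p - q) * log (q ^ 2 / p ^ 2)) :
    p ^ 2 * exp (p * a) = q ^ 2 * exp (q * a) := by
  have hexp : exp (p * a) / exp (q * a) = q ^ 2 / p ^ 2 := by
    rw [← exp_sub, ← sub_mul, ha, ← mul_assoc, mul_one_div_cancel (sub_ne_zero.mpr hpq), one_mul,
      exp_log (by positivity)]
  rw [div_eq_div_iff (exp_pos _).ne' (by positivity)] at hexp
  linarith

theorem sq_mul_exp_le_of_le (hqp : q ≤ p) (ha : p ^ 2 * exp (p * a) = q ^ 2 * exp (q * a))
    {x : ℝ} (hx : x ≤ a) : p ^ 2 * exp (p * x) ≤ q ^ 2 * exp (q * x) :=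
  calc p ^ 2 * exp (p * x) = p ^ 2 * exp (p * a) * exp (p * (x - a)) := by
        rw [mul_assoc, ← exp_add]; ring_nf
    _ ≤ p ^ 2 * exp (p * a) * exp (q * (x - a)) := by
        gcongr ?_ * exp ?_
        exact mul_le_mul_of_nonpos_right hqp (sub_nonpos.mpr hx)
    _ = q ^ 2 * exp (q * x) := by
        rw [ha, mul_assoc, ← exp_add]; ring_nf

theorem antitoneOn_Iic_mul_exp_sub_mul_exp (hqp : q ≤ p)
    (ha : p ^ 2 * exp (p * a) = q ^ 2 * exp (q * a)) :
    AntitoneOn (fun x => p * exp (p * x) - q * exp (q * x)) (Iic a) := by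
  have hderiv : ∀ x, HasDerivAt (fun x => p * exp (p * x) - q * exp (q * x))
      (p ^ 2 * exp (p * x) - q ^ 2 * exp (q * x)) x := fun x =>
    (((hasDerivAt_exp_mul p x).const_mul p).sub ((hasDerivAt_exp_mul q x).const_mul q)).congr_deriv
      (by ring)
  refine antitoneOn_of_deriv_nonpos (convex_Iic a)
    (fun x _ => (hderiv x).continuousAt.continuousWithinAt)
    (fun x _ => (hderiv x).differentiableAt.differentiableWithinAt) fun x hx => ?_
  rw [interior_Iic] at hx
  rw [(hderiv x).deriv, sub_nonpos]
  exact sq_mul_exp_le_of_le hqp ha hx.le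

theorem exp_sub_exp_div_mul_exp_sub_mul_exp (hpq : p ≠ q) (hp : p ≠ 0) (hq : q ≠ 0)
    (ha : p ^ 2 * exp (p * a) = q ^ 2 * exp (q * a)) :
    (exp (p * a) - exp (q * a)) / (p * exp (p * a) - q * exp (q * a)) = (p + q) / (p * q) := by
  have hden : p * exp (p * a) - q * exp (q * a) ≠ 0 := by
    intro h
    have : q * (q - p) * exp (q * a) = 0 := by linear_combination p * h - ha
    simp [hq, sub_ne_zero.mpr hpq.symm, (exp_pos _).ne'] at this
  rw [div_eq_div_iff hden (mul_ne_zero hp hq)]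
  linear_combination -ha

end ExpDifference

theorem mul_add_eq_mul_mul_of_quadratic_roots {ρ μ s p q : ℝ} (hpq : p ≠ q)
    (hp : ρ - μ * p - s * p ^ 2 = 0) (hq : ρ - μ * q - s * q ^ 2 = 0) :
    ρ * (p + q) = μ * (p * q) := by
  have hsum : μ + s * (p + q) = 0 := by
    have h : (p - q) * (μ + s * (p + q)) = 0 := by linear_combination hq - hp
    exact (mul_eq_zero.mp h).resolve_left (sub_ne_zero.mpr hpq)
  linear_combination (p + q) * hp + p ^ 2 * hsum

theorem stmt_5_general (ρ μ σ mm mp : ℝ) (hρ : 0 < ρ)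
    (hmm : mm < 0) (hmp : 0 < mp)
    (hrootm : ρ - μ * mm - σ^2 / 2 * mm^2 = 0)
    (hrootp : ρ - μ * mp - σ^2 / 2 * mp^2 = 0) :
    let f : ℝ → ℝ := fun x => Real.exp (mp * x) - Real.exp (mm * x)
    let xhat : ℝ := (1 / (mp - mm)) * Real.log (mm^2 / mp^2)
    let Vhat : ℝ → ℝ := fun x =>
      if x ≤ xhat then f x / (mp * Real.exp (mp * xhat) - mm * Real.exp (mm * xhat))
      else x - xhat + μ / ρ
    ConcaveOn ℝ (Set.Ioi 0) Vhat := by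
  intro f xhat Vhat
  have hpq : mp ≠ mm := (hmm.trans hmp).ne'
  set C := mp * exp (mp * xhat) - mm * exp (mm * xhat)
  have hC : 0 < C := by nlinarith [exp_pos (mp * xhat), exp_pos (mm * xhat)]
  have hkey := sq_mul_exp_eq_of_eq_log hpq hmp.ne' hmm.ne rfl
  have hval : f xhat / C = μ / ρ := by
    rw [exp_sub_exp_div_mul_exp_sub_mul_exp hpq hmp.ne' hmm.ne hkey,
      div_eq_div_iff (mul_ne_zero hmp.ne' hmm.ne) hρ.ne']
    linear_combination mul_add_eq_mul_mul_of_quadratic_roots hpq hrootp hrootm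
  have hconcave : ConcaveOn ℝ univ Vhat :=
    concaveOn_univ_ite_of_hasDerivAt (F := fun x => f x / C) (G := fun x => x - xhat + μ / ρ)
      (fun x => ((hasDerivAt_exp_mul mp x).sub (hasDerivAt_exp_mul mm x)).div_const C)
      (fun x => ((hasDerivAt_id x).sub_const xhat).add_const (μ / ρ))
      (by simp only [hval, sub_self, zero_add]) (div_self hC.ne')
      (fun x hx y hy hxy => div_le_div_of_nonneg_right
        (antitoneOn_Iic_mul_exp_sub_mul_exp (hmm.trans hmp).le hkey hx hy hxy) hC.le)
      antitoneOn_const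
  exact hconcave.subset (subset_univ _) (convex_Ioi 0)

/-- The function V̂, equal to f(x)/f'(x̂) on [0,x̂] and x - x̂ + μ/ρ beyond x̂,
is concave on (0,∞). -/
theorem stmt_5 (ρ μ σ mm mp : ℝ) (hρ : 0 < ρ) (hμ : 0 < μ) (hσ : 0 < σ)
    (hmm : mm < 0) (hmp : 0 < mp)
    (hrootm : ρ - μ * mm - σ^2 / 2 * mm^2 = 0)
    (hrootp : ρ - μ * mp - σ^2 / 2 * mp^2 = 0) :
    let f : ℝ → ℝ := fun x => Real.exp (mp * x) - Real.exp (mm * x)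
    let xhat : ℝ := (1 / (mp - mm)) * Real.log (mm^2 / mp^2)
    let Vhat : ℝ → ℝ := fun x =>
      if x ≤ xhat then f x / (mp * Real.exp (mp * xhat) - mm * Real.exp (mm * xhat))
      else x - xhat + μ / ρ
    ConcaveOn ℝ (Set.Ioi 0) Vhat :=
  stmt_5_general ρ μ σ mm mp hρ hmm hmp hrootm hrootp
end

section
/- Let v₀, v₁ : (0,∞) → ℝ satisfy v₁(x) ≥ v₀(x + (1-λ)g) for all x > 0 and vᵢ(y) > vᵢ(y - λg) for all y > 0 (with vᵢ := 0 on (-∞,0]). If x ∈ S₁ := {x ≥ 0 : v₁(x) = v₀(x + (1-λ)g)}, then x + (1-λ)g ∉ S₀ := {y ≥ 0 : v₀(y) = v₁(y - g)}. -/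
lemma pos_of_jump (c : ℝ) (hc : 0 < c) (f : ℝ → ℝ)
    (hz : ∀ x ≤ (0:ℝ), f x = 0) (hj : ∀ y > (0:ℝ), f y > f (y - c)) :
    ∀ y > (0:ℝ), f y > 0 := by
  have key : ∀ n : ℕ, ∀ y : ℝ, 0 < y → y ≤ n * c → f y > 0 := by
    intro n
    induction n with
    | zero => intro y hy hle; simp at hle; linarith
    | succ n ih =>
      intro y hy hle
      have h1 := hj y hy
      by_cases h : y - c ≤ 0
      · rw [hz _ h] at h1; exact h1
      · push_neg at h
        have : y - c ≤ n * c := by push_cast at hle ⊢; linarith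
        have := ih (y - c) h this
        linarith
  intro y hy
  obtain ⟨n, hn⟩ := Archimedean.arch y hc
  have : y ≤ n * c := by simpa [nsmul_eq_mul] using hn
  exact key n y hy this

/-- If x belongs to the switching region S₁, then x + (1-λ)g does not belong to
the switching region S₀. -/
theorem stmt_11 (g lam : ℝ) (hg : 0 < g) (hlam₀ : 0 < lam) (hlam₁ : lam < 1)
    (v₀ v₁ : ℝ → ℝ)
    (hzero₀ : ∀ x ≤ (0:ℝ), v₀ x = 0) (hzero₁ : ∀ x ≤ (0:ℝ), v₁ x = 0)
    (hswitch : ∀ x > (0:ℝ), v₁ x ≥ v₀ (x + (1 - lam) * g))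
    (hjump₀ : ∀ y > (0:ℝ), v₀ y > v₀ (y - lam * g))
    (hjump₁ : ∀ y > (0:ℝ), v₁ y > v₁ (y - lam * g)) :
    ∀ x : ℝ, 0 ≤ x → v₁ x = v₀ (x + (1 - lam) * g) →
      x + (1 - lam) * g ∉ {y : ℝ | 0 ≤ y ∧ v₀ y = v₁ (y - g)} := by
  intro x hx hS₁ hmem
  obtain ⟨hy, hS₀⟩ := hmem
  have hyg : x + (1 - lam) * g - g = x - lam * g := by ring
  rw [hyg] at hS₀
  rcases lt_or_eq_of_le hx with hx | hx
  · -- x > 0 : v₁ x = v₀ (x+(1-λ)g) = v₁ (x - λg) contradicts jump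
    have := hjump₁ x hx
    rw [hS₁, hS₀] at this
    exact lt_irrefl _ this
  · -- x = 0
    subst hx
    have hy' : (0:ℝ) + (1 - lam) * g > 0 := by nlinarith
    have hpos := pos_of_jump (lam * g) (by positivity) v₀ hzero₀ hjump₀ _ hy'
    have hz1 : v₁ ((0:ℝ) - lam * g) = 0 := hzero₁ _ (by nlinarith)
    rw [hS₀, hz1] at hpos
    exact lt_irrefl _ hpos
end

section
/- Let v : (a,b) → ℝ be C¹, strictly increasing, and C² on the open set C = {x ∈ (a,b) : v'(x) > 1} with ρv(x) - μv'(x) - (σ²/2)v''(x) = 0 on C. If (c,d) ⊂ C with c, d ∈ (a,b) and v'(c) = v'(d) = 1, then v(c) = v(d) = μ/ρ, contradicting strict monotonicity; hence the set D = {x : v'(x) = 1} is an interval. -/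
/-- For a C¹ strictly increasing function v with v' ≥ 1 solving the ODE on
{v' > 1}, the dividend region D = {v' = 1} is an interval. -/
theorem stmt_12 (ρ μ σ a b : ℝ) (hρ : 0 < ρ) (hσ : 0 < σ) (hab : a < b)
    (v : ℝ → ℝ)
    (hC1 : ContDiffOn ℝ 1 v (Set.Ioo a b))
    (hd : ∀ x ∈ Set.Ioo a b, 1 ≤ deriv v x)
    (hmono : StrictMonoOn v (Set.Ioo a b))
    (hC2 : ContDiffOn ℝ 2 v {x ∈ Set.Ioo a b | 1 < deriv v x})
    (hode : ∀ x ∈ Set.Ioo a b, 1 < deriv v x →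
      ρ * v x - μ * deriv v x - σ^2 / 2 * deriv (deriv v) x = 0) :
    Set.OrdConnected {x ∈ Set.Ioo a b | deriv v x = 1} := by
  constructor
  intro c hc d hd' z hz
  have hcab : c ∈ Set.Ioo a b := hc.1
  have hdab : d ∈ Set.Ioo a b := hd'.1
  have hzab : z ∈ Set.Ioo a b := ⟨lt_of_lt_of_le hcab.1 hz.1, lt_of_le_of_lt hz.2 hdab.2⟩
  refine ⟨hzab, ?_⟩
  by_contra hne
  have hz1 : 1 < deriv v z := lt_of_le_of_ne (hd z hzab) (Ne.symm hne)
  have hwcont : ContinuousOn (deriv v) (Set.Ioo a b) :=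
    hC1.continuousOn_deriv_of_isOpen isOpen_Ioo le_rfl
  have hvcont : ContinuousOn v (Set.Ioo a b) := hC1.continuousOn
  -- the sets of points where deriv v = 1, to the left and right of z
  set S : Set ℝ := Set.Icc c z ∩ (deriv v) ⁻¹' {1} with hS
  set T : Set ℝ := Set.Icc z d ∩ (deriv v) ⁻¹' {1} with hT
  have hSsub : S ⊆ Set.Icc c z := Set.inter_subset_left
  have hTsub : T ⊆ Set.Icc z d := Set.inter_subset_left
  have hIccS : Set.Icc c z ⊆ Set.Ioo a b := fun x hx =>
    ⟨lt_of_lt_of_le hcab.1 hx.1, lt_of_le_of_lt hx.2 hzab.2⟩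
  have hIccT : Set.Icc z d ⊆ Set.Ioo a b := fun x hx =>
    ⟨lt_of_lt_of_le hzab.1 hx.1, lt_of_le_of_lt hx.2 hdab.2⟩
  have hSclosed : IsClosed S :=
    (hwcont.mono hIccS).preimage_isClosed_of_isClosed isClosed_Icc isClosed_singleton
  have hTclosed : IsClosed T :=
    (hwcont.mono hIccT).preimage_isClosed_of_isClosed isClosed_Icc isClosed_singleton
  have hScomp : IsCompact S := isCompact_Icc.of_isClosed_subset hSclosed hSsub
  have hTcomp : IsCompact T := isCompact_Icc.of_isClosed_subset hTclosed hTsub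
  have hSne : S.Nonempty := ⟨c, ⟨le_rfl, hz.1⟩, hc.2⟩
  have hTne : T.Nonempty := ⟨d, ⟨hz.2, le_rfl⟩, hd'.2⟩
  set c' : ℝ := sSup S with hc'def
  set d' : ℝ := sInf T with hd'def
  have hc'S : c' ∈ S := hScomp.sSup_mem hSne
  have hd'T : d' ∈ T := hTcomp.sInf_mem hTne
  have hwc' : deriv v c' = 1 := hc'S.2
  have hwd' : deriv v d' = 1 := hd'T.2
  have hc'ab : c' ∈ Set.Ioo a b := hIccS hc'S.1
  have hd'ab : d' ∈ Set.Ioo a b := hIccT hd'T.1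
  have hc'z : c' < z := lt_of_le_of_ne hc'S.1.2 (fun h => by
    rw [h] at hwc'; exact absurd hwc' (ne_of_lt hz1).symm)
  have hzd' : z < d' := lt_of_le_of_ne hd'T.1.1 (fun h => by
    rw [← h] at hwd'; exact absurd hwd' (ne_of_lt hz1).symm)
  -- on (c', d'), deriv v > 1
  have hkey : ∀ x, c' < x → x < d' → x ∈ Set.Ioo a b ∧ 1 < deriv v x := by
    intro x h1 h2
    have hxab : x ∈ Set.Ioo a b := ⟨lt_trans hc'ab.1 h1, lt_trans h2 hd'ab.2⟩
    refine ⟨hxab, lt_of_le_of_ne (hd x hxab) (fun heq => ?_)⟩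
    rcases le_or_gt x z with hxz | hxz
    · have hxS : x ∈ S := ⟨⟨le_trans hc'S.1.1 h1.le, hxz⟩, heq.symm⟩
      exact absurd (le_csSup hScomp.bddAbove hxS) (not_le.2 h1)
    · have hxT : x ∈ T := ⟨⟨hxz.le, le_trans h2.le hd'T.1.2⟩, heq.symm⟩
      exact absurd (csInf_le hTcomp.bddBelow hxT) (not_le.2 h2)
  have hc'd' : c' < d' := lt_trans hc'z hzd'
  -- Claim A : μ ≤ ρ * v c'
  have hA : μ ≤ ρ * v c' := by
    by_contra hlt
    push_neg at hlt
    have hg : ContinuousAt (fun x => ρ * v x - μ * deriv v x) c' := by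
      exact ((hvcont.continuousAt (isOpen_Ioo.mem_nhds hc'ab)).const_smul ρ).sub
        ((hwcont.continuousAt (isOpen_Ioo.mem_nhds hc'ab)).const_smul μ)
    have hev : ∀ᶠ x in nhds c', ρ * v x - μ * deriv v x < 0 := by
      have : ρ * v c' - μ * deriv v c' < 0 := by rw [hwc']; linarith
      exact hg.eventually_lt continuousAt_const this
    obtain ⟨δ, hδ, hball⟩ := Metric.eventually_nhds_iff.1 hev
    set t : ℝ := min (c' + δ / 2) ((c' + d') / 2) with htdef
    have hct : c' < t := lt_min (by linarith) (by linarith)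
    have htd : t < d' := lt_of_le_of_lt (min_le_right _ _) (by linarith)
    have hIcc : Set.Icc c' t ⊆ Set.Ioo a b := fun x hx =>
      ⟨lt_of_lt_of_le hc'ab.1 hx.1, lt_of_le_of_lt (le_trans hx.2 htd.le) hd'ab.2⟩
    have hanti : StrictAntiOn (deriv v) (Set.Icc c' t) := by
      apply strictAntiOn_of_deriv_neg (convex_Icc c' t) (hwcont.mono hIcc)
      intro x hx
      rw [interior_Icc] at hx
      have hx1 : c' < x := hx.1
      have hx2 : x < d' := lt_trans hx.2 htd
      obtain ⟨hxab, hxw⟩ := hkey x hx1 hx2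
      have hodex := hode x hxab hxw
      have hgx : ρ * v x - μ * deriv v x < 0 := by
        apply hball
        rw [Real.dist_eq, abs_of_pos (by linarith)]
        have : x < c' + δ / 2 := lt_of_lt_of_le hx.2 (min_le_left _ _)
        linarith
      nlinarith [sq_nonneg σ]
    have := hanti ⟨le_rfl, hct.le⟩ ⟨hct.le, le_rfl⟩ hct
    rw [hwc'] at this
    exact absurd (hd t (hIcc ⟨hct.le, le_rfl⟩)) (not_le.2 this)
  -- Claim B : ρ * v d' ≤ μ
  have hB : ρ * v d' ≤ μ := by
    by_contra hlt
    push_neg at hlt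
    have hg : ContinuousAt (fun x => ρ * v x - μ * deriv v x) d' := by
      exact ((hvcont.continuousAt (isOpen_Ioo.mem_nhds hd'ab)).const_smul ρ).sub
        ((hwcont.continuousAt (isOpen_Ioo.mem_nhds hd'ab)).const_smul μ)
    have hev : ∀ᶠ x in nhds d', 0 < ρ * v x - μ * deriv v x := by
      have : (0:ℝ) < ρ * v d' - μ * deriv v d' := by rw [hwd']; linarith
      exact continuousAt_const.eventually_lt hg this
    obtain ⟨δ, hδ, hball⟩ := Metric.eventually_nhds_iff.1 hev
    set t : ℝ := max (d' - δ / 2) ((c' + d') / 2) with htdef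
    have htd : t < d' := max_lt (by linarith) (by linarith)
    have hct : c' < t := lt_of_lt_of_le (by linarith) (le_max_right _ _)
    have hIcc : Set.Icc t d' ⊆ Set.Ioo a b := fun x hx =>
      ⟨lt_of_lt_of_le (lt_trans hc'ab.1 hct) hx.1, lt_of_le_of_lt hx.2 hd'ab.2⟩
    have hmono' : StrictMonoOn (deriv v) (Set.Icc t d') := by
      apply strictMonoOn_of_deriv_pos (convex_Icc t d') (hwcont.mono hIcc)
      intro x hx
      rw [interior_Icc] at hx
      have hx1 : c' < x := lt_trans hct hx.1
      have hx2 : x < d' := hx.2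
      obtain ⟨hxab, hxw⟩ := hkey x hx1 hx2
      have hodex := hode x hxab hxw
      have hgx : 0 < ρ * v x - μ * deriv v x := by
        apply hball
        rw [Real.dist_eq, abs_of_neg (by linarith)]
        have : d' - δ / 2 < x := lt_of_le_of_lt (le_max_left _ _) hx.1
        linarith
      nlinarith [sq_nonneg σ]
    have := hmono' ⟨le_rfl, htd.le⟩ ⟨htd.le, le_rfl⟩ htd
    rw [hwd'] at this
    exact absurd (hd t (hIcc ⟨le_rfl, htd.le⟩)) (not_le.2 this)
  -- contradiction with strict monotonicity
  have hvlt : v c' < v d' := hmono hc'ab hd'ab hc'd'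
  nlinarith
end

section
/- Let v : (0,∞) → ℝ be continuous and suppose for every x₀ > 0 and every C² function φ with v - φ having a local maximum at x₀ and v(x₀) = φ(x₀), either φ'(x₀) ≤ 1 or ρv(x₀) - μφ'(x₀) - (σ²/2)φ''(x₀) ≤ 0 holds. If v admits left and right derivatives with v'⁻(x₀) > v'⁺(x₀) at some x₀ and v'⁺(x₀) > 1, then testing with φ(x) = v(x₀) + q(x - x₀) - (1/(2ε))(x - x₀)² for q ∈ (v'⁺(x₀), v'⁻(x₀)) and ε small yields a contradiction; hence v is differentiable at every point where the subsolution condition forces φ' > 1. -/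
/-!
If the left derivative `vL x₀` exceeded the right derivative `vR x₀`, pick a slope `q` strictly
between them. The kink lets every parabola `v x₀ + q (x - x₀) - k (x - x₀)²` touch `v`
from above at `x₀`, whatever `k` is. Its first derivative is `q > 1`, so the subsolution property
forces `ρ v x₀ - μ q + σ² k ≤ 0`, which fails once `k` is large.
-/

open Set Filter Topology

theorem isLocalMax_of_hasDerivWithinAt_Iio_Ioi {f : ℝ → ℝ} {x a b : ℝ}
    (hl : HasDerivWithinAt f a (Iio x) x) (ha : 0 < a)
    (hr : HasDerivWithinAt f b (Ioi x) x) (hb : b < 0) : IsLocalMax f x := by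
  have left : ∀ᶠ y in 𝓝[<] x, f y ≤ f x := by
    have hslope := (hasDerivWithinAt_iff_tendsto_slope' (by simp)).mp hl
    filter_upwards [hslope.eventually (eventually_gt_nhds ha), self_mem_nhdsWithin]
      with y hy hyx
    exact ((slope_pos_iff_gt hyx).mp hy).le
  have right : ∀ᶠ y in 𝓝[>] x, f y ≤ f x := by
    have hslope := (hasDerivWithinAt_iff_tendsto_slope' (by simp)).mp hr
    filter_upwards [hslope.eventually (eventually_lt_nhds hb), self_mem_nhdsWithin]
      with y hy hxy
    exact ((slope_neg_iff_of_le (le_of_lt hxy)).mp hy).le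
  rw [IsLocalMax, IsMaxFilter, ← nhdsNE_sup_pure, ← nhdsLT_sup_nhdsGT, eventually_sup,
    eventually_sup]
  exact ⟨⟨left, right⟩, eventually_pure.2 le_rfl⟩

def parabola (a q k x₀ : ℝ) (x : ℝ) : ℝ :=
  a + q * (x - x₀) - k * (x - x₀) ^ 2

namespace parabola

variable (a q k x₀ : ℝ)

theorem contDiff {n : WithTop ℕ∞} : ContDiff ℝ n (parabola a q k x₀) := by
  unfold parabola
  fun_prop

theorem hasDerivAt (x : ℝ) :
    HasDerivAt (parabola a q k x₀) (q - 2 * k * (x - x₀)) x := by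
  have h : HasDerivAt (fun x => a + q * (x - x₀) - k * (x - x₀) ^ 2)
      (q * 1 - k * ((2 : ℕ) * (x - x₀) ^ (2 - 1) * 1)) x :=
    ((((hasDerivAt_id' x).sub_const x₀).const_mul q).const_add a).sub
      ((((hasDerivAt_id' x).sub_const x₀).pow 2).const_mul k)
  exact h.congr_deriv (by push_cast; ring)

theorem deriv_eq : deriv (parabola a q k x₀) = fun x => q - 2 * k * (x - x₀) :=
  funext fun x => (hasDerivAt a q k x₀ x).deriv

theorem deriv_self : deriv (parabola a q k x₀) x₀ = q := by
  simp [deriv_eq]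

theorem deriv_deriv (x : ℝ) : deriv (deriv (parabola a q k x₀)) x = -(2 * k) := by
  have h := (((hasDerivAt_id' x).sub_const x₀).const_mul (2 * k)).const_sub q
  rw [deriv_eq, h.deriv, mul_one]

theorem apply_self : parabola a q k x₀ x₀ = a := by
  simp [parabola]

end parabola

theorem isLocalMax_sub_parabola {f : ℝ → ℝ} {x₀ dL dR q : ℝ} (k : ℝ)
    (hL : HasDerivWithinAt f dL (Iio x₀) x₀) (hR : HasDerivWithinAt f dR (Ioi x₀) x₀)
    (hRq : dR < q) (hqL : q < dL) :
    IsLocalMax (fun x => f x - parabola (f x₀) q k x₀ x) x₀ := by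
  have hφ : HasDerivAt (parabola (f x₀) q k x₀) q x₀ := by
    simpa using parabola.hasDerivAt (f x₀) q k x₀ x₀
  exact isLocalMax_of_hasDerivWithinAt_Iio_Ioi (hL.sub hφ.hasDerivWithinAt) (by linarith)
    (hR.sub hφ.hasDerivWithinAt) (by linarith)

theorem stmt_17_general (ρ μ σ : ℝ) (hσ : 0 < σ)
    (v vL vR : ℝ → ℝ)
    (hL : ∀ x ∈ Set.Ioi (0:ℝ), HasDerivWithinAt v (vL x) (Set.Iio x) x)
    (hR : ∀ x ∈ Set.Ioi (0:ℝ), HasDerivWithinAt v (vR x) (Set.Ioi x) x)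
    (hsub : ∀ x₀ ∈ Set.Ioi (0:ℝ), ∀ φ : ℝ → ℝ, ContDiff ℝ 2 φ →
      v x₀ = φ x₀ → IsLocalMax (fun x => v x - φ x) x₀ →
      deriv φ x₀ ≤ 1 ∨ ρ * v x₀ - μ * deriv φ x₀ - σ^2 / 2 * deriv (deriv φ) x₀ ≤ 0) :
    ∀ x₀ ∈ Set.Ioi (0:ℝ), 1 < vR x₀ → vL x₀ ≤ vR x₀ := by
  intro x₀ hx₀ hR1
  by_contra! hlt
  obtain ⟨q, hRq, hqL⟩ := exists_between hlt
  obtain ⟨k, hσk⟩ : ∃ k, σ ^ 2 * k = μ * q - ρ * v x₀ + 1 :=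
    ⟨_, mul_div_cancel₀ _ (by positivity)⟩
  have hmax := isLocalMax_sub_parabola k (hL x₀ hx₀) (hR x₀ hx₀) hRq hqL
  rcases hsub x₀ hx₀ _ (parabola.contDiff _ _ _ _) (parabola.apply_self _ _ _ _).symm hmax
    with h | h
  · rw [parabola.deriv_self] at h
    linarith
  · rw [parabola.deriv_self, parabola.deriv_deriv] at h
    linarith

/-- For a continuous viscosity subsolution of min{ρv - μv' - (σ²/2)v'', v' - 1} ≤ 0,
at any point where the right derivative exceeds 1 the left derivative cannot
exceed the right derivative. -/
theorem stmt_17 (ρ μ σ : ℝ) (hρ : 0 < ρ) (hσ : 0 < σ)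
    (v vL vR : ℝ → ℝ)
    (hcont : ContinuousOn v (Set.Ioi 0))
    (hL : ∀ x ∈ Set.Ioi (0:ℝ), HasDerivWithinAt v (vL x) (Set.Iio x) x)
    (hR : ∀ x ∈ Set.Ioi (0:ℝ), HasDerivWithinAt v (vR x) (Set.Ioi x) x)
    (hsub : ∀ x₀ ∈ Set.Ioi (0:ℝ), ∀ φ : ℝ → ℝ, ContDiff ℝ 2 φ →
      v x₀ = φ x₀ → IsLocalMax (fun x => v x - φ x) x₀ →
      deriv φ x₀ ≤ 1 ∨ ρ * v x₀ - μ * deriv φ x₀ - σ^2 / 2 * deriv (deriv φ) x₀ ≤ 0) :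
    ∀ x₀ ∈ Set.Ioi (0:ℝ), 1 < vR x₀ → vL x₀ ≤ vR x₀ :=
  stmt_17_general ρ μ σ hσ v vL vR hL hR hsub
end
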